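/- arXiv:1612.02302 — 5 statements merged into one kernel-verified Lean document; each statement's English description precedes it below -/
import Mathlib

section
/- If f : ℝ≥0 → ℝ is concave, nonnegative, satisfies f(0) = 0, is differentiable at 0 with f'(0) = 1, and f(p) < p for all p > 0, then f is strictly subadditive: for all p₁, p₂ > 0, f(p₁ + p₂) < f(p₁) + f(p₂). -/
/-!
With `c = f (p₁ + p₂) / (p₁ + p₂) < 1 = f'(0)`, the graph of `f` lies strictly above the line
`t ↦ c * t` at some small `x > 0` and meets it at `p₁ + p₂`; concavity of `f - c • id` then puts
the graph strictly above the line on all of `[x, p₁ + p₂)`, so `c * pᵢ < f pᵢ`, and summing gives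
the claim.
-/

open Set Filter Topology

theorem ConcaveOn.mul_lt_of_mul_lt_of_mul_le {s : Set ℝ} {f : ℝ → ℝ} (hf : ConcaveOn ℝ s f)
    {c x y z : ℝ} (hx : x ∈ s) (hy : y ∈ s) (hxz : x < z) (hzy : z < y)
    (hfx : c * x < f x) (hfy : c * y ≤ f y) : c * z < f z := by
  have hg : ConcaveOn ℝ s (f - fun t ↦ c * t) := hf.sub ((LinearMap.mulLeft ℝ c).convexOn hf.1)
  have hz : z ∈ openSegment ℝ x y := by rw [openSegment_eq_Ioo (hxz.trans hzy)]; exact ⟨hxz, hzy⟩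
  by_contra! h
  have := hg.lt_right_of_left_lt hx hy hz (by simp only [Pi.sub_apply]; linarith)
  simp only [Pi.sub_apply] at this
  linarith

theorem HasDerivWithinAt.eventually_mul_sub_lt_sub {f : ℝ → ℝ} {f' c a : ℝ}
    (hf : HasDerivWithinAt f f' (Ici a) a) (hc : c < f') :
    ∀ᶠ x in 𝓝[>] a, c * (x - a) < f x - f a := by
  have hslope := (hasDerivWithinAt_iff_tendsto_slope' (lt_irrefl a)).1 hf.Ioi_of_Ici
  filter_upwards [hslope.eventually (lt_mem_nhds hc), self_mem_nhdsWithin] with x hx hax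
  rwa [slope_def_field, lt_div_iff₀ (sub_pos.2 hax)] at hx

theorem ConcaveOn.div_mul_lt_of_hasDerivWithinAt {f : ℝ → ℝ} {f' s p : ℝ}
    (hf : ConcaveOn ℝ (Ici 0) f) (h0 : f 0 = 0) (hderiv : HasDerivWithinAt f f' (Ici 0) 0)
    (hs : f s < f' * s) (hp : 0 < p) (hps : p < s) : f s / s * p < f p := by
  have hs₀ : 0 < s := hp.trans hps
  have hc : f s / s < f' := (div_lt_iff₀ hs₀).2 hs
  obtain ⟨x, ⟨hx, hxp⟩, hx₀⟩ := ((hderiv.eventually_mul_sub_lt_sub hc).and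
    ((eventually_lt_nhds hp).filter_mono nhdsWithin_le_nhds) |>.and self_mem_nhdsWithin).exists
  rw [sub_zero, h0, sub_zero] at hx
  exact hf.mul_lt_of_mul_lt_of_mul_le (le_of_lt hx₀) hs₀.le hxp hps hx
    (div_mul_cancel₀ _ hs₀.ne').le

theorem strict_subadditivity_of_concave_general
    (f : ℝ → ℝ)
    (hconc : ConcaveOn ℝ (Set.Ici (0 : ℝ)) f)
    (h0 : f 0 = 0)
    (hderiv : HasDerivWithinAt f 1 (Set.Ici (0 : ℝ)) 0)
    (hlt : ∀ p > (0 : ℝ), f p < p) :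
    ∀ p₁ > (0 : ℝ), ∀ p₂ > (0 : ℝ), f (p₁ + p₂) < f p₁ + f p₂ := by
  intro p₁ hp₁ p₂ hp₂
  have hs : f (p₁ + p₂) < 1 * (p₁ + p₂) := by rw [one_mul]; exact hlt _ (by positivity)
  have h₁ := hconc.div_mul_lt_of_hasDerivWithinAt h0 hderiv hs hp₁ (by linarith)
  have h₂ := hconc.div_mul_lt_of_hasDerivWithinAt h0 hderiv hs hp₂ (by linarith)
  calc f (p₁ + p₂) = f (p₁ + p₂) / (p₁ + p₂) * p₁ + f (p₁ + p₂) / (p₁ + p₂) * p₂ := by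
        rw [← mul_add, div_mul_cancel₀ _ (by positivity)]
    _ < f p₁ + f p₂ := add_lt_add h₁ h₂

/-- If `f : ℝ → ℝ` restricted to `[0,∞)` is concave, nonnegative, satisfies
`f 0 = 0`, is differentiable at `0` (from the right) with derivative `1`, and `f p < p`
for all `p > 0`, then `f` is strictly subadditive on positive arguments. -/
theorem strict_subadditivity_of_concave
    (f : ℝ → ℝ)
    (hconc : ConcaveOn ℝ (Set.Ici (0 : ℝ)) f)
    (hnonneg : ∀ p ≥ (0 : ℝ), 0 ≤ f p)
    (h0 : f 0 = 0)
    (hderiv : HasDerivWithinAt f 1 (Set.Ici (0 : ℝ)) 0)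
    (hlt : ∀ p > (0 : ℝ), f p < p) :
    ∀ p₁ > (0 : ℝ), ∀ p₂ > (0 : ℝ), f (p₁ + p₂) < f p₁ + f p₂ :=
  strict_subadditivity_of_concave_general f hconc h0 hderiv hlt
end

section
/- Let f : ℝ≥0 → ℝ be concave, f(0) = 0, and suppose there exist 0 < p₁ ≤ p₂ with f(p₁ + p₂) = f(p₁) + f(p₂). Then f is linear on the interval [0, p₁ + p₂], i.e. f(p) = (f(p₁)/p₁)·p for all p ∈ [0, p₁ + p₂]. -/
/-!
Subtract the chord slope: with `s = p₁ + p₂` and `c = f s / s`, the function `g x = f x - c x`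
is concave and vanishes at `0` and `s`, hence is nonnegative on `[0, s]`. Additivity gives
`g p₁ + g p₂ = g s = 0`, so `g p₁ = 0`. A concave function vanishing at both ends and at an
interior point of an interval vanishes on the whole interval, so `f x = c x` on `[0, s]`.
-/

open Set

theorem ConcaveOn.eqOn_zero_Icc {𝕜 β : Type*} [Field 𝕜] [LinearOrder 𝕜]
    [IsStrictOrderedRing 𝕜] [AddCommMonoid β] [LinearOrder β] [IsOrderedCancelAddMonoid β]
    [Module 𝕜 β] [PosSMulStrictMono 𝕜 β] {s : Set 𝕜} {g : 𝕜 → β} {a b c : 𝕜}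
    (hg : ConcaveOn 𝕜 s g) (ha : a ∈ s) (hc : c ∈ s) (hb : b ∈ Ioo a c)
    (hga : g a = 0) (hgb : g b = 0) (hgc : g c = 0) : EqOn g 0 (Icc a c) := by
  intro x hx
  refine le_antisymm ?_ ?_
  · rcases le_total x b with hxb | hbx
    · have hxs : x ∈ s := hg.1.ordConnected.out ha hc ⟨hx.1, hxb.trans hb.2.le⟩
      simpa [hgb] using hg.left_le_of_le_right'' hxs hc hxb hb.2 (by rw [hgb, hgc])
    · have hxs : x ∈ s := hg.1.ordConnected.out ha hc hx
      simpa [hgb] using hg.right_le_of_le_left'' ha hxs hb.1 hbx (by rw [hgb, hga])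
  · simpa [hga, hgc] using hg.ge_on_segment ha hc (segment_eq_Icc (hb.1.trans hb.2).le ▸ hx)

/-- If `f` is concave on `[0,∞)` with `f 0 = 0` and equality
`f (p₁ + p₂) = f p₁ + f p₂` holds for some `0 < p₁ ≤ p₂`, then `f` is linear
on `[0, p₁ + p₂]`. -/
theorem concave_linear_of_additivity
    (f : ℝ → ℝ)
    (hconc : ConcaveOn ℝ (Set.Ici (0 : ℝ)) f)
    (h0 : f 0 = 0)
    (p₁ p₂ : ℝ) (hp₁ : 0 < p₁) (hp₁₂ : p₁ ≤ p₂)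
    (heq : f (p₁ + p₂) = f p₁ + f p₂) :
    ∀ p ∈ Set.Icc (0 : ℝ) (p₁ + p₂), f p = (f p₁ / p₁) * p := by
  have hp₂ : 0 < p₂ := hp₁.trans_le hp₁₂
  set s := p₁ + p₂
  have hs : 0 < s := add_pos hp₁ hp₂
  set c := f s / s
  set g := f - ⇑(LinearMap.mulLeft ℝ c)
  have hg : ConcaveOn ℝ (Ici 0) g :=
    hconc.sub ((LinearMap.mulLeft ℝ c).convexOn (convex_Ici 0))
  have hg0 : g 0 = 0 := by simp [g, h0]
  have hgs : g s = 0 := by simp [g, c, hs.ne']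
  have hg_nonneg : ∀ x ∈ Icc 0 s, 0 ≤ g x := fun x hx ↦ by
    simpa [hg0, hgs] using hg.ge_on_segment self_mem_Ici hs.le (segment_eq_Icc hs.le ▸ hx)
  have hgp₁ : g p₁ = 0 := by
    have hsum : g p₁ + g p₂ = g s := by
      simp only [Pi.sub_apply, LinearMap.mulLeft_apply, heq, g, s]
      ring
    linarith [hg_nonneg p₁ ⟨hp₁.le, by linarith⟩, hg_nonneg p₂ ⟨hp₂.le, by linarith⟩]
  have hg_zero := hg.eqOn_zero_Icc self_mem_Ici hs.le ⟨hp₁, by linarith⟩ hg0 hgp₁ hgs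
  have hf_lin : ∀ p ∈ Icc 0 s, f p = c * p := fun p hp ↦ by
    simpa [g, sub_eq_zero] using hg_zero hp
  intro p hp
  rw [hf_lin p hp, hf_lin p₁ ⟨hp₁.le, by linarith⟩, mul_div_cancel_right₀ c hp₁.ne']
end

section
/- For each real c with 0 ≤ c < 1 and K₁ > 0, the function ξ = (ξ₁, ξ₂) ↦ (|ξ|² + |ξ₁||ξ|)/(K₁|ξ|⁴ + |ξ|² − c ξ₁²) belongs to L²(ℝ²), and its L² norm is bounded by C/(1−c)^{1/4} for a constant C depending only on K₁. -/
/-!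
Write `r = ξ₁² + ξ₂²`, so that the denominator is `(1 - c) ξ₁² + ξ₂² + K r²`. Since `|ξ₁| ≤ √r`
the numerator is at most `2r`, and `4r² ≤ 8(ξ₁⁴ + ξ₂⁴)`. Keeping only `K ξ₁⁴`, resp. `K ξ₂⁴`, of
`K r²` in the denominator bounds the squared multiplier by `8 (w₁(ξ₁, ξ₂) + w₂(ξ₂, ξ₁))`, where
`wᵢ(u, v) = u⁴ / (aᵢ v² + pᵢ u² + K u⁴)²` with `(a₁, p₁) = (1, 1 - c)` and `(a₂, p₂) = (1 - c, 1)`.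
Integrating `w = wᵢ` first in `v` gives at most `π / √a · |u| / (p + K u²)^{3/2}`, and then in `u`
exactly `2π / (K √(a p))`. Hence `‖m‖₂² ≤ 32π / (K √(1 - c))`, and `C = √(32π / K)` works.
-/

open MeasureTheory Real Set Filter Topology
open scoped ENNReal

lemma lintegral_comp_abs {f : ℝ → ℝ≥0∞} :
    ∫⁻ x, f |x| = 2 * ∫⁻ x in Ioi 0, f x := by
  have h_pos : ∫⁻ x in Ioi 0, f |x| = ∫⁻ x in Ioi 0, f x :=
    setLIntegral_congr_fun measurableSet_Ioi fun x hx => by rw [abs_of_pos hx]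
  have h_neg : ∫⁻ x in Iic 0, f |x| = ∫⁻ x in Ioi 0, f x := by
    rw [← lintegral_indicator measurableSet_Iic, ← lintegral_neg_eq_self, ← h_pos,
      setLIntegral_congr Ioi_ae_eq_Ici, ← lintegral_indicator measurableSet_Ici]
    congr 1 with x
    simp [Set.indicator_apply, abs_neg]
  rw [← lintegral_add_compl _ measurableSet_Iic, compl_Iic, h_neg, h_pos, two_mul]

lemma lintegral_inv_mul_sq_add {a A : ℝ} (ha : 0 < a) (hA : 0 < A) :
    ∫⁻ t, ENNReal.ofReal (a * t ^ 2 + A)⁻¹ = ENNReal.ofReal (π / (√a * √A)) := by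
  have hb : 0 < √a / √A := by positivity
  have h_eq : (fun t => (a * t ^ 2 + A)⁻¹) = fun t => A⁻¹ * (1 + (√a / √A * t) ^ 2)⁻¹ := by
    ext t
    rw [mul_pow, div_pow, sq_sqrt ha.le, sq_sqrt hA.le, ← mul_inv]
    congr 1
    field_simp
    ring
  have h_int : Integrable fun t => (a * t ^ 2 + A)⁻¹ := by
    rw [h_eq]
    exact (integrable_inv_one_add_sq.comp_mul_left' hb.ne').const_mul _
  rw [← ofReal_integral_eq_lintegral_ofReal h_int (ae_of_all _ fun t => by positivity), h_eq,
    integral_const_mul, Measure.integral_comp_mul_left (fun t => (1 + t ^ 2)⁻¹),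
    integral_univ_inv_one_add_sq, smul_eq_mul, abs_of_pos (inv_pos.2 hb)]
  have : √A ≠ 0 := by positivity
  have : √a ≠ 0 := by positivity
  congr 1
  field_simp
  rw [sq_sqrt hA.le]

lemma hasDerivAt_neg_inv_mul_sqrt {p K : ℝ} (hp : 0 < p) (hK : 0 < K) (t : ℝ) :
    HasDerivAt (fun t => -(K * √(p + K * t ^ 2))⁻¹)
      (t / ((p + K * t ^ 2) * √(p + K * t ^ 2))) t := by
  have hw : 0 < p + K * t ^ 2 := by positivity
  have h_inner : HasDerivAt (fun t => p + K * t ^ 2) (K * (2 * t)) t := by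
    simpa using ((hasDerivAt_pow 2 t).const_mul K).const_add p
  refine (((h_inner.sqrt hw.ne').const_mul K).inv (by positivity)).neg.congr_deriv ?_
  have : √(p + K * t ^ 2) ≠ 0 := by positivity
  field_simp
  rw [sq_sqrt hw.le]

lemma tendsto_neg_inv_mul_sqrt {p K : ℝ} (hK : 0 < K) :
    Tendsto (fun t => -(K * √(p + K * t ^ 2))⁻¹) atTop (𝓝 0) := by
  have h_sq : Tendsto (fun t : ℝ => p + K * t ^ 2) atTop atTop :=
    tendsto_atTop_add_const_left _ _ ((tendsto_pow_atTop two_ne_zero).const_mul_atTop hK)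
  simpa using ((tendsto_sqrt_atTop.comp h_sq).const_mul_atTop hK).inv_tendsto_atTop.neg

lemma lintegral_abs_div_mul_sqrt {p K : ℝ} (hp : 0 < p) (hK : 0 < K) :
    ∫⁻ t, ENNReal.ofReal (|t| / ((p + K * t ^ 2) * √(p + K * t ^ 2))) =
      ENNReal.ofReal (2 / (K * √p)) := by
  set g := fun t => t / ((p + K * t ^ 2) * √(p + K * t ^ 2))
  have hg_nonneg : ∀ t ∈ Ioi (0 : ℝ), 0 ≤ g t := fun t ht => div_nonneg ht.le (by positivity)
  have h_deriv : ∀ t ∈ Ici (0 : ℝ), HasDerivAt _ (g t) t :=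
    fun t _ => hasDerivAt_neg_inv_mul_sqrt hp hK t
  have h_lim := tendsto_neg_inv_mul_sqrt (p := p) hK
  have h_int := integrableOn_Ioi_deriv_of_nonneg' h_deriv hg_nonneg h_lim
  have h_val := integral_Ioi_of_hasDerivAt_of_nonneg' h_deriv hg_nonneg h_lim
  have h_abs := lintegral_comp_abs (f := fun t => ENNReal.ofReal (g t))
  simp only [g, sq_abs] at h_abs
  rw [h_abs, ← ofReal_integral_eq_lintegral_ofReal h_int
    ((ae_restrict_iff' measurableSet_Ioi).2 (ae_of_all _ hg_nonneg)), h_val,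
    ← ENNReal.ofReal_ofNat 2, ← ENNReal.ofReal_mul zero_le_two]
  congr 1
  simp only [ne_eq, two_ne_zero, not_false_eq_true, zero_pow, mul_zero, add_zero, sub_neg_eq_add,
    zero_add]
  ring

noncomputable def quarticWeight (a p K : ℝ) (ξ : ℝ × ℝ) : ℝ :=
  ξ.1 ^ 4 / (a * ξ.2 ^ 2 + p * ξ.1 ^ 2 + K * ξ.1 ^ 4) ^ 2

lemma quarticWeight_nonneg (a p K : ℝ) (ξ : ℝ × ℝ) : 0 ≤ quarticWeight a p K ξ :=
  div_nonneg (by positivity) (sq_nonneg _)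

section
variable {a p K : ℝ}

lemma lintegral_quarticWeight_slice_le (ha : 0 < a) (hp : 0 < p) (hK : 0 < K) (u : ℝ) :
    ∫⁻ v, ENNReal.ofReal (quarticWeight a p K (u, v)) ≤
      ENNReal.ofReal (π / √a * (|u| / ((p + K * u ^ 2) * √(p + K * u ^ 2)))) := by
  rcases eq_or_ne u 0 with rfl | hu
  · simp [quarticWeight]
  set w := p + K * u ^ 2
  have hw : 0 < w := by positivity
  have hA : 0 < u ^ 2 * w := by positivity
  -- Lossy by a factor 2 only: the exact integral of `(a v² + A)⁻²` is `π / (2 √a A^{3/2})`.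
  have h_pt : ∀ v, quarticWeight a p K (u, v) ≤ u ^ 2 / w * (a * v ^ 2 + u ^ 2 * w)⁻¹ := by
    intro v
    have h_den : a * v ^ 2 + p * u ^ 2 + K * u ^ 4 = a * v ^ 2 + u ^ 2 * w := by ring
    have h_le : u ^ 2 * w ≤ a * v ^ 2 + u ^ 2 * w := by nlinarith [sq_nonneg v]
    rw [quarticWeight, h_den, div_le_iff₀ (by positivity)]
    field_simp
    nlinarith
  calc ∫⁻ v, ENNReal.ofReal (quarticWeight a p K (u, v))
      ≤ ∫⁻ v, ENNReal.ofReal (u ^ 2 / w) * ENNReal.ofReal (a * v ^ 2 + u ^ 2 * w)⁻¹ :=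
        lintegral_mono fun v => by
          rw [← ENNReal.ofReal_mul (by positivity)]
          exact ENNReal.ofReal_le_ofReal (h_pt v)
    _ = ENNReal.ofReal (u ^ 2 / w) * ENNReal.ofReal (π / (√a * √(u ^ 2 * w))) := by
        rw [lintegral_const_mul' _ _ ENNReal.ofReal_ne_top, lintegral_inv_mul_sq_add ha hA]
    _ = ENNReal.ofReal (π / √a * (|u| / (w * √w))) := by
        rw [← ENNReal.ofReal_mul (by positivity), sqrt_mul (sq_nonneg u), sqrt_sq_eq_abs,
          ← sq_abs u]
        have : |u| ≠ 0 := abs_ne_zero.2 hu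
        have : √w ≠ 0 := by positivity
        congr 1
        field_simp

lemma lintegral_quarticWeight_le (ha : 0 < a) (hp : 0 < p) (hK : 0 < K) :
    ∫⁻ ξ, ENNReal.ofReal (quarticWeight a p K ξ) ≤ ENNReal.ofReal (2 * π / (K * √a * √p)) := by
  rw [Measure.volume_eq_prod, lintegral_prod _ (by unfold quarticWeight; fun_prop)]
  calc ∫⁻ u, ∫⁻ v, ENNReal.ofReal (quarticWeight a p K (u, v))
      ≤ ∫⁻ u, ENNReal.ofReal (π / √a) *
          ENNReal.ofReal (|u| / ((p + K * u ^ 2) * √(p + K * u ^ 2))) :=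
        lintegral_mono fun u => (lintegral_quarticWeight_slice_le ha hp hK u).trans_eq
          (ENNReal.ofReal_mul (by positivity))
    _ = ENNReal.ofReal (π / √a) * ENNReal.ofReal (2 / (K * √p)) := by
        rw [lintegral_const_mul' _ _ ENNReal.ofReal_ne_top, lintegral_abs_div_mul_sqrt hp hK]
    _ = ENNReal.ofReal (2 * π / (K * √a * √p)) := by
        rw [← ENNReal.ofReal_mul (by positivity)]
        congr 1
        ring

end

noncomputable def multiplier (K c : ℝ) (ξ : ℝ × ℝ) : ℝ :=
  (√(ξ.1 ^ 2 + ξ.2 ^ 2) ^ 2 + |ξ.1| * √(ξ.1 ^ 2 + ξ.2 ^ 2)) /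
    (K * √(ξ.1 ^ 2 + ξ.2 ^ 2) ^ 4 + √(ξ.1 ^ 2 + ξ.2 ^ 2) ^ 2 - c * ξ.1 ^ 2)

lemma multiplier_sq_le {K c : ℝ} (hK : 0 < K) (hc : c < 1) (ξ : ℝ × ℝ) :
    multiplier K c ξ ^ 2 ≤
      8 * (quarticWeight 1 (1 - c) K ξ + quarticWeight (1 - c) 1 K ξ.swap) := by
  obtain ⟨x, y⟩ := ξ
  by_cases h0 : x = 0 ∧ y = 0
  · simp [h0, multiplier, quarticWeight]
  have hr : 0 < x ^ 2 + y ^ 2 := by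
    rcases not_and_or.1 h0 with h | h <;> positivity
  have hε : 0 < 1 - c := sub_pos.2 hc
  have h_sqrt : √(x ^ 2 + y ^ 2) ^ 2 = x ^ 2 + y ^ 2 := sq_sqrt hr.le
  have h_abs : |x| ≤ √(x ^ 2 + y ^ 2) := abs_le_sqrt (by nlinarith)
  have h_num_le : √(x ^ 2 + y ^ 2) ^ 2 + |x| * √(x ^ 2 + y ^ 2) ≤ 2 * (x ^ 2 + y ^ 2) := by
    nlinarith [mul_le_mul_of_nonneg_right h_abs (sqrt_nonneg (x ^ 2 + y ^ 2))]
  have h_den : K * √(x ^ 2 + y ^ 2) ^ 4 + √(x ^ 2 + y ^ 2) ^ 2 - c * x ^ 2 =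
      (1 - c) * x ^ 2 + y ^ 2 + K * (x ^ 2 + y ^ 2) ^ 2 := by
    rw [show √(x ^ 2 + y ^ 2) ^ 4 = (√(x ^ 2 + y ^ 2) ^ 2) ^ 2 by ring, h_sqrt]
    ring
  set D := (1 - c) * x ^ 2 + y ^ 2 + K * (x ^ 2 + y ^ 2) ^ 2
  set D₁ := 1 * y ^ 2 + (1 - c) * x ^ 2 + K * x ^ 4
  set D₂ := (1 - c) * x ^ 2 + 1 * y ^ 2 + K * y ^ 4
  have h_quad : 0 < (1 - c) * x ^ 2 + y ^ 2 := by
    rcases not_and_or.1 h0 with h | h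
    · nlinarith [mul_pos hε (by positivity : 0 < x ^ 2), sq_nonneg y]
    · nlinarith [mul_nonneg hε.le (sq_nonneg x), (by positivity : 0 < y ^ 2)]
  have hD₁ : 0 < D₁ := by nlinarith [mul_nonneg hK.le (pow_two_nonneg (x ^ 2))]
  have hD₂ : 0 < D₂ := by nlinarith [mul_nonneg hK.le (pow_two_nonneg (y ^ 2))]
  have h_cross : 0 ≤ K * (x ^ 2 * y ^ 2) := by positivity
  have hD₁D : D₁ ≤ D := by nlinarith [mul_nonneg hK.le (pow_two_nonneg (y ^ 2))]
  have hD₂D : D₂ ≤ D := by nlinarith [mul_nonneg hK.le (pow_two_nonneg (x ^ 2))]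
  rw [multiplier, h_den]
  calc ((√(x ^ 2 + y ^ 2) ^ 2 + |x| * √(x ^ 2 + y ^ 2)) / D) ^ 2
      ≤ (2 * (x ^ 2 + y ^ 2)) ^ 2 / D ^ 2 := by rw [div_pow]; gcongr
    _ ≤ 8 * (x ^ 4 / D ^ 2 + y ^ 4 / D ^ 2) := by
        rw [← add_div, mul_div_assoc']
        gcongr
        nlinarith [sq_nonneg (x ^ 2 - y ^ 2)]
    _ ≤ 8 * (x ^ 4 / D₁ ^ 2 + y ^ 4 / D₂ ^ 2) := by gcongr

lemma lintegral_multiplier_sq_le {K c : ℝ} (hK : 0 < K) (hc : c < 1) :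
    ∫⁻ ξ, ENNReal.ofReal (multiplier K c ξ ^ 2) ≤ ENNReal.ofReal (32 * π / K / √(1 - c)) := by
  have hε : 0 < 1 - c := sub_pos.2 hc
  have h_swap : ∫⁻ ξ : ℝ × ℝ, ENNReal.ofReal (quarticWeight (1 - c) 1 K ξ.swap) =
      ∫⁻ ξ, ENNReal.ofReal (quarticWeight (1 - c) 1 K ξ) := by
    rw [Measure.volume_eq_prod]
    exact lintegral_prod_swap (fun ξ => ENNReal.ofReal (quarticWeight (1 - c) 1 K ξ))
  calc ∫⁻ ξ, ENNReal.ofReal (multiplier K c ξ ^ 2)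
      ≤ ∫⁻ ξ, (ENNReal.ofReal 8 * ENNReal.ofReal (quarticWeight 1 (1 - c) K ξ) +
          ENNReal.ofReal 8 * ENNReal.ofReal (quarticWeight (1 - c) 1 K ξ.swap)) :=
        lintegral_mono fun ξ => by
          rw [← ENNReal.ofReal_mul (by norm_num), ← ENNReal.ofReal_mul (by norm_num),
            ← ENNReal.ofReal_add (mul_nonneg (by norm_num) (quarticWeight_nonneg _ _ _ _))
              (mul_nonneg (by norm_num) (quarticWeight_nonneg _ _ _ _)), ← mul_add]
          exact ENNReal.ofReal_le_ofReal (multiplier_sq_le hK hc ξ)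
    _ = (ENNReal.ofReal 8 * ∫⁻ ξ, ENNReal.ofReal (quarticWeight 1 (1 - c) K ξ)) +
          ENNReal.ofReal 8 * ∫⁻ ξ, ENNReal.ofReal (quarticWeight (1 - c) 1 K ξ) := by
        rw [lintegral_add_left (by unfold quarticWeight; fun_prop),
          lintegral_const_mul' _ _ ENNReal.ofReal_ne_top,
          lintegral_const_mul' _ _ ENNReal.ofReal_ne_top, h_swap]
    _ ≤ ENNReal.ofReal 8 * ENNReal.ofReal (2 * π / (K * √1 * √(1 - c))) +
          ENNReal.ofReal 8 * ENNReal.ofReal (2 * π / (K * √(1 - c) * √1)) := by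
        gcongr
        · exact lintegral_quarticWeight_le one_pos hε hK
        · exact lintegral_quarticWeight_le hε one_pos hK
    _ = ENNReal.ofReal (32 * π / K / √(1 - c)) := by
        rw [← ENNReal.ofReal_mul (by norm_num), ← ENNReal.ofReal_mul (by norm_num),
          ← ENNReal.ofReal_add (by positivity) (by positivity), sqrt_one]
        congr 1
        ring

lemma eLpNorm_two_le_ofReal_sqrt {α : Type*} [MeasurableSpace α] {μ : Measure α} {f : α → ℝ}
    {B : ℝ} (hB : 0 ≤ B) (h : ∫⁻ x, ENNReal.ofReal (f x ^ 2) ∂μ ≤ ENNReal.ofReal B) :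
    eLpNorm f 2 μ ≤ ENNReal.ofReal √B := by
  have h_enorm : ∀ x, ‖f x‖ₑ ^ (2 : ℝ) = ENNReal.ofReal (f x ^ 2) := fun x => by
    rw [Real.enorm_eq_ofReal_abs, ENNReal.ofReal_rpow_of_nonneg (abs_nonneg _) zero_le_two,
      rpow_two, sq_abs]
  rw [eLpNorm_eq_lintegral_rpow_enorm_toReal two_ne_zero ENNReal.ofNat_ne_top,
    ENNReal.toReal_ofNat, sqrt_eq_rpow, ← ENNReal.ofReal_rpow_of_nonneg hB (by norm_num)]
  simp_rw [h_enorm]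
  gcongr

/-- For `0 ≤ c < 1` and `K₁ > 0`, the function
`ξ ↦ (|ξ|² + |ξ₁||ξ|)/(K₁|ξ|⁴ + |ξ|² − c ξ₁²)` is in `L²(ℝ²)` with
`L²` norm bounded by `C/(1-c)^{1/4}`, `C` depending only on `K₁`. -/
theorem multiplier_L2_estimate (K₁ : ℝ) (hK₁ : 0 < K₁) :
    ∃ C > (0 : ℝ), ∀ c : ℝ, 0 ≤ c → c < 1 →
      MemLp (fun ξ : ℝ × ℝ =>
          (Real.sqrt (ξ.1 ^ 2 + ξ.2 ^ 2) ^ 2 + |ξ.1| * Real.sqrt (ξ.1 ^ 2 + ξ.2 ^ 2)) /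
            (K₁ * Real.sqrt (ξ.1 ^ 2 + ξ.2 ^ 2) ^ 4 + Real.sqrt (ξ.1 ^ 2 + ξ.2 ^ 2) ^ 2
              - c * ξ.1 ^ 2))
        2 (volume : Measure (ℝ × ℝ)) ∧
      eLpNorm (fun ξ : ℝ × ℝ =>
          (Real.sqrt (ξ.1 ^ 2 + ξ.2 ^ 2) ^ 2 + |ξ.1| * Real.sqrt (ξ.1 ^ 2 + ξ.2 ^ 2)) /
            (K₁ * Real.sqrt (ξ.1 ^ 2 + ξ.2 ^ 2) ^ 4 + Real.sqrt (ξ.1 ^ 2 + ξ.2 ^ 2) ^ 2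
              - c * ξ.1 ^ 2))
        2 (volume : Measure (ℝ × ℝ)) ≤ ENNReal.ofReal (C / (1 - c) ^ ((1 : ℝ) / 4)) := by
  refine ⟨√(32 * π / K₁), by positivity, fun c _ hc => ?_⟩
  have hε : 0 < 1 - c := sub_pos.2 hc
  have h_root : √(√(1 - c)) = (1 - c) ^ ((1 : ℝ) / 4) := by
    rw [sqrt_eq_rpow, sqrt_eq_rpow, ← rpow_mul hε.le]
    norm_num
  have h_meas : Measurable (multiplier K₁ c) := by unfold multiplier; fun_prop
  have h_norm : eLpNorm (multiplier K₁ c) 2 volume ≤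
      ENNReal.ofReal (√(32 * π / K₁) / (1 - c) ^ ((1 : ℝ) / 4)) := by
    rw [← h_root, ← sqrt_div' _ (sqrt_nonneg _)]
    exact eLpNorm_two_le_ofReal_sqrt (by positivity) (lintegral_multiplier_sq_le hK₁ hc)
  exact ⟨⟨h_meas.aestronglyMeasurable, h_norm.trans_lt ENNReal.ofReal_lt_top⟩, h_norm⟩
end

section
/- Let (ρ, φ) with ρ − 1 ∈ H²(ℝ^d), φ ∈ H²(ℝ^d), be a smooth solution of the traveling wave system −c∂₁φ + χ'(ρ)|∇φ|²/2 − K(χ(ρ))Δρ − (K∘χ)'(ρ)|∇ρ|²/2 + g̃(ρ) = 0 together with −c∂₁ρ + div(χ(ρ)∇φ) = 0. Then c ∫_{ℝ^d} (ρ − 1)∂₁φ dx = ∫_{ℝ^d} χ(ρ)|∇φ|² dx. -/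
open MeasureTheory

open Filter Metric RealInnerProductSpace in
lemma opNorm_sq_eq_sum {d : ℕ} (l : EuclideanSpace ℝ (Fin d) →L[ℝ] ℝ) :
    ‖l‖ ^ 2 = ∑ i : Fin d, (l (EuclideanSpace.single i 1)) ^ 2 := by
  set w := (InnerProductSpace.toDual ℝ (EuclideanSpace ℝ (Fin d))).symm l with hw
  have hlx : ∀ x, l x = ⟪w, x⟫ := fun x =>
    (InnerProductSpace.toDual_symm_apply).symm
  have hnorm : ‖l‖ = ‖w‖ := by
    rw [hw]; exact ((InnerProductSpace.toDual ℝ _).symm.norm_map l).symm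
  rw [hnorm]
  have h2 : ∀ i, l (EuclideanSpace.single i 1) = w i := by
    intro i
    rw [hlx, EuclideanSpace.inner_single_right]
    simp
  simp_rw [h2]
  rw [EuclideanSpace.norm_eq, Real.sq_sqrt (by positivity)]
  congr 1; ext i; rw [Real.norm_eq_abs, sq_abs]

lemma l2_mul_integrable {α : Type*} [MeasurableSpace α] {μ : Measure α} {f g : α → ℝ}
    (hf : MemLp f 2 μ) (hg : MemLp g 2 μ) : Integrable (fun x => f x * g x) μ := by
  have h : MemLp (f • g) 1 μ := hg.smul hf (hpqr := ⟨by rw [inv_one, ENNReal.inv_two_add_inv_two]⟩)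
  exact (memLp_one_iff_integrable.mp h)

open Filter Metric in
lemma integral_div_sum_eq_zero {d : ℕ}
    (W : Fin d → EuclideanSpace ℝ (Fin d) → ℝ)
    (hW : ∀ i, ContDiff ℝ (⊤ : ℕ∞) (W i))
    (hWint : ∀ i, Integrable (W i) (volume : Measure (EuclideanSpace ℝ (Fin d))))
    (hG : Integrable (fun x => ∑ i : Fin d, fderiv ℝ (W i) x (EuclideanSpace.single i 1))
      (volume : Measure (EuclideanSpace ℝ (Fin d)))) :
    ∫ x, ∑ i : Fin d, fderiv ℝ (W i) x (EuclideanSpace.single i 1) = 0 := by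
  set G : EuclideanSpace ℝ (Fin d) → ℝ :=
    fun x => ∑ i : Fin d, fderiv ℝ (W i) x (EuclideanSpace.single i 1) with hGdef
  let b : ContDiffBump (0 : EuclideanSpace ℝ (Fin d)) := ⟨1, 2, one_pos, one_lt_two⟩
  have hbtop : ContDiff ℝ ((⊤:ℕ∞) : WithTop ℕ∞) (b : EuclideanSpace ℝ (Fin d) → ℝ) := b.contDiff
  obtain ⟨C, hC⟩ : ∃ C, ∀ y, ‖fderiv ℝ (b : EuclideanSpace ℝ (Fin d) → ℝ) y‖ ≤ C :=
    (b.hasCompactSupport.fderiv (𝕜 := ℝ)).exists_bound_of_continuous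
      (hbtop.fderiv_right (m := (⊤:ℕ∞)) (by exact_mod_cast le_top)).continuous
  have hC0 : 0 ≤ C := le_trans (norm_nonneg _) (hC 0)
  set L : ℕ → EuclideanSpace ℝ (Fin d) →L[ℝ] EuclideanSpace ℝ (Fin d) :=
    fun n => (((n : ℝ) + 1)⁻¹) • ContinuousLinearMap.id ℝ _ with hL
  set ψ : ℕ → EuclideanSpace ℝ (Fin d) → ℝ := fun n x => b (L n x) with hψ
  have hbdiff : Differentiable ℝ (b : EuclideanSpace ℝ (Fin d) → ℝ) :=
    hbtop.differentiable (by simp)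
  have hfdψ : ∀ n x, HasFDerivAt (ψ n)
      ((fderiv ℝ (b : EuclideanSpace ℝ (Fin d) → ℝ) (L n x)).comp (L n)) x := fun n x =>
    ((hbdiff (L n x)).hasFDerivAt).comp x (L n).hasFDerivAt
  have hψdiff : ∀ n, Differentiable ℝ (ψ n) := fun n x => (hfdψ n x).differentiableAt
  have hψcont : ∀ n, Continuous (ψ n) := fun n => (hψdiff n).continuous
  have hn1 : ∀ n : ℕ, (0:ℝ) < (n:ℝ) + 1 := fun n => by positivity
  have hLnorm : ∀ n x, ‖L n x‖ = ((n:ℝ)+1)⁻¹ * ‖x‖ := by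
    intro n x; simp [hL, norm_smul, abs_of_pos (hn1 n)]
  have hψder : ∀ n x (v : EuclideanSpace ℝ (Fin d)), ‖v‖ = 1 →
      ‖fderiv ℝ (ψ n) x v‖ ≤ C * ((n:ℝ)+1)⁻¹ := by
    intro n x v hv
    rw [(hfdψ n x).fderiv]
    have hLv : (L n) v = ((n:ℝ)+1)⁻¹ • v := by simp [hL]
    rw [ContinuousLinearMap.comp_apply, hLv]
    calc ‖fderiv ℝ (b : EuclideanSpace ℝ (Fin d) → ℝ) (L n x) (((n:ℝ)+1)⁻¹ • v)‖
        ≤ ‖fderiv ℝ (b : EuclideanSpace ℝ (Fin d) → ℝ) (L n x)‖ * ‖((n:ℝ)+1)⁻¹ • v‖ :=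
          (fderiv ℝ _ (L n x)).le_opNorm _
      _ ≤ C * ((n:ℝ)+1)⁻¹ := by
          rw [norm_smul, hv, mul_one, Real.norm_eq_abs, abs_of_pos (by positivity)]
          exact mul_le_mul_of_nonneg_right (hC _) (by positivity)
  have hψsupp : ∀ n, HasCompactSupport (ψ n) := by
    intro n
    apply HasCompactSupport.intro (isCompact_closedBall (0 : EuclideanSpace ℝ (Fin d))
      (2 * ((n:ℝ)+1)))
    intro x hx
    simp only [mem_closedBall, dist_zero_right, not_le] at hx
    have hxL : L n x ∉ ball (0 : EuclideanSpace ℝ (Fin d)) 2 := by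
      simp only [mem_ball, dist_zero_right, not_lt]
      rw [hLnorm]
      calc (2:ℝ) = ((n:ℝ)+1)⁻¹ * (2*((n:ℝ)+1)) := by field_simp
        _ ≤ ((n:ℝ)+1)⁻¹ * ‖x‖ := by
            apply mul_le_mul_of_nonneg_left _ (by positivity)
            nlinarith
    have hns : L n x ∉ Function.support (b : EuclideanSpace ℝ (Fin d) → ℝ) := by
      rw [b.support_eq]; simpa using hxL
    simpa [hψ] using Function.notMem_support.mp hns
  have hψ01 : ∀ n x, 0 ≤ ψ n x ∧ ψ n x ≤ 1 := fun n x => ⟨b.nonneg, b.le_one⟩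
  have hWicont : ∀ i : Fin d,
      Continuous (fun x => fderiv ℝ (W i) x (EuclideanSpace.single i 1)) := fun i =>
    (((hW i).fderiv_right (m := (⊤ : ℕ∞)) (by simp)).continuous.clm_apply continuous_const)
  have hGcont : Continuous G := by
    rw [hGdef]; exact continuous_finset_sum _ (fun i _ => hWicont i)
  have hint1 : ∀ n i, Integrable (fun x => ψ n x *
      fderiv ℝ (W i) x (EuclideanSpace.single i 1)) volume := fun n i =>
    (((hψcont n).mul (hWicont i)).integrable_of_hasCompactSupport ((hψsupp n).mul_right))
  have hint2 : ∀ n i, Integrable (fun x => fderiv ℝ (ψ n) x (EuclideanSpace.single i 1) * W i x)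
      volume := by
    intro n i
    apply (hWint i).bdd_mul (c := C * ((n:ℝ)+1)⁻¹)
    · exact (((hbtop.comp (L n).contDiff).fderiv_right (m := (⊤:ℕ∞))
        (by exact_mod_cast le_top)).continuous.clm_apply continuous_const).aestronglyMeasurable
    · exact Filter.Eventually.of_forall (fun x => hψder n x _ (by simp [EuclideanSpace.norm_single]))
  have hint3 : ∀ n i, Integrable (fun x => ψ n x * W i x) volume := by
    intro n i
    exact (hWint i).bdd_mul (c := 1) (hψcont n).aestronglyMeasurable
      (Filter.Eventually.of_forall (fun x => by rw [Real.norm_eq_abs, abs_of_nonneg (hψ01 n x).1]; exact (hψ01 n x).2))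
  have key : ∀ n, ∫ x, ψ n x * G x =
      - ∑ i : Fin d, ∫ x, fderiv ℝ (ψ n) x (EuclideanSpace.single i 1) * W i x := by
    intro n
    have e1 : ∫ x, ψ n x * G x = ∑ i : Fin d, ∫ x, ψ n x *
        fderiv ℝ (W i) x (EuclideanSpace.single i 1) := by
      rw [← integral_finset_sum]
      · congr 1; ext x; rw [hGdef]; exact Finset.mul_sum _ _ _
      · exact fun i _ => hint1 n i
    rw [e1, ← Finset.sum_neg_distrib]
    congr 1; ext i
    exact integral_mul_fderiv_eq_neg_fderiv_mul_of_integrable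
      (hint2 n i) (hint1 n i) (hint3 n i) (fun x _ => hψdiff n x) (fun x _ => (hW i).differentiable (by simp) x)
  have T1 : Tendsto (fun n => ∫ x, ψ n x * G x) atTop (nhds (∫ x, G x)) := by
    apply tendsto_integral_of_dominated_convergence (fun x => |G x|)
    · exact fun n => ((hψcont n).mul hGcont).aestronglyMeasurable
    · exact hG.abs
    · intro n
      filter_upwards with x
      rw [Real.norm_eq_abs, abs_mul]
      calc |ψ n x| * |G x| ≤ 1 * |G x| := by
            apply mul_le_mul_of_nonneg_right _ (abs_nonneg _)
            rw [abs_of_nonneg (hψ01 n x).1]; exact (hψ01 n x).2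
        _ = |G x| := one_mul _
    · filter_upwards with x
      apply Tendsto.congr' _ (tendsto_const_nhds (x := G x))
      filter_upwards [eventually_ge_atTop ⌈‖x‖⌉₊] with n hn
      have hone : ψ n x = 1 := by
        apply b.one_of_mem_closedBall
        simp only [mem_closedBall, dist_zero_right]
        rw [hLnorm]
        have hx1 : ‖x‖ ≤ (n:ℝ) + 1 := by
          calc ‖x‖ ≤ (⌈‖x‖⌉₊ : ℝ) := Nat.le_ceil _
            _ ≤ (n : ℝ) := by exact_mod_cast hn
            _ ≤ (n : ℝ) + 1 := by linarith
        calc ((n:ℝ)+1)⁻¹ * ‖x‖ ≤ ((n:ℝ)+1)⁻¹ * ((n:ℝ)+1) := by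
              apply mul_le_mul_of_nonneg_left hx1 (by positivity)
          _ = 1 := by field_simp
      rw [hone, one_mul]
  have T2 : Tendsto (fun n => - ∑ i : Fin d, ∫ x,
      fderiv ℝ (ψ n) x (EuclideanSpace.single i 1) * W i x) atTop (nhds 0) := by
    rw [← neg_zero]
    apply Tendsto.neg
    refine squeeze_zero_norm (f := fun n : ℕ => ∑ i : Fin d, ∫ x,
      fderiv ℝ (ψ n) x (EuclideanSpace.single i 1) * W i x) (a := fun n => ((n:ℝ)+1)⁻¹ *
      (C * ∑ i : Fin d, ∫ x, ‖W i x‖)) (fun n => ?_) ?_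
    · calc ‖∑ i : Fin d, ∫ x, fderiv ℝ (ψ n) x (EuclideanSpace.single i 1) * W i x‖
          ≤ ∑ i : Fin d, ‖∫ x, fderiv ℝ (ψ n) x (EuclideanSpace.single i 1) * W i x‖ :=
            norm_sum_le _ _
        _ ≤ ∑ i : Fin d, (C * ((n:ℝ)+1)⁻¹) * ∫ x, ‖W i x‖ := by
            apply Finset.sum_le_sum
            intro i _
            calc ‖∫ x, fderiv ℝ (ψ n) x (EuclideanSpace.single i 1) * W i x‖
                ≤ ∫ x, ‖fderiv ℝ (ψ n) x (EuclideanSpace.single i 1) * W i x‖ :=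
                  norm_integral_le_integral_norm _
              _ ≤ ∫ x, (C * ((n:ℝ)+1)⁻¹) * ‖W i x‖ := by
                  apply integral_mono (hint2 n i).norm ((hWint i).norm.const_mul _)
                  intro x
                  simp only [norm_mul]
                  exact mul_le_mul_of_nonneg_right
                    (hψder n x _ (by simp [EuclideanSpace.norm_single])) (norm_nonneg _)
              _ = (C * ((n:ℝ)+1)⁻¹) * ∫ x, ‖W i x‖ := integral_const_mul _ _
        _ = ((n:ℝ)+1)⁻¹ * (C * ∑ i : Fin d, ∫ x, ‖W i x‖) := by
            rw [Finset.mul_sum, Finset.mul_sum]; congr 1; ext i; ring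
    · have h1 : Tendsto (fun n : ℕ => ((n:ℝ)+1)⁻¹) atTop (nhds 0) := by
        simpa [one_div] using tendsto_one_div_add_atTop_nhds_zero_nat (𝕜 := ℝ)
      simpa using h1.mul_const (C * ∑ i : Fin d, ∫ x, ‖W i x‖)
  exact tendsto_nhds_unique (T1.congr (fun n => key n)) T2

/-- For a smooth `H²` solution of the modified traveling wave system,
multiplying the mass equation by `φ` and integrating gives
`c ∫ (ρ - 1) ∂₁φ = ∫ χ(ρ) |∇φ|²`. -/
theorem pohozaev_energie1 (d : ℕ) (hd : 0 < d)
    (c : ℝ) (χ K gt : ℝ → ℝ)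
    (hχ : ContDiff ℝ (⊤ : ℕ∞) χ) (hχbd : ∃ M, ∀ r, |χ r| + |deriv χ r| ≤ M)
    (hK : ContDiff ℝ (⊤ : ℕ∞) K) (hKpos : ∀ r, 0 < K r) (hgt : ContDiff ℝ (⊤ : ℕ∞) gt)
    (ρ φ : EuclideanSpace ℝ (Fin d) → ℝ)
    (hρ : ContDiff ℝ (⊤ : ℕ∞) ρ) (hφ : ContDiff ℝ (⊤ : ℕ∞) φ)
    -- `ρ - 1 ∈ H²` and `φ ∈ H²`
    (hρH2 : ∀ k ≤ 2, MemLp (fun x => ‖iteratedFDeriv ℝ k (fun y => ρ y - 1) x‖) 2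
      (volume : Measure (EuclideanSpace ℝ (Fin d))))
    (hφH2 : ∀ k ≤ 2, MemLp (fun x => ‖iteratedFDeriv ℝ k φ x‖) 2
      (volume : Measure (EuclideanSpace ℝ (Fin d))))
    -- mass equation: `-c ∂₁ρ + div(χ(ρ) ∇φ) = 0`
    (hmass : ∀ x, -c * fderiv ℝ ρ x (EuclideanSpace.single (⟨0, hd⟩ : Fin d) 1) +
        ∑ i : Fin d, fderiv ℝ
          (fun y => χ (ρ y) * fderiv ℝ φ y (EuclideanSpace.single i 1)) x
          (EuclideanSpace.single i 1) = 0)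
    -- momentum equation:
    -- `-c ∂₁φ + χ'(ρ)|∇φ|²/2 - K(χ(ρ))Δρ - (K∘χ)'(ρ)|∇ρ|²/2 + g̃(ρ) = 0`
    (hmom : ∀ x, -c * fderiv ℝ φ x (EuclideanSpace.single (⟨0, hd⟩ : Fin d) 1) +
        deriv χ (ρ x) * ‖fderiv ℝ φ x‖ ^ 2 / 2 -
        K (χ (ρ x)) * (∑ i : Fin d, fderiv ℝ
          (fun y => fderiv ℝ ρ y (EuclideanSpace.single i 1)) x
          (EuclideanSpace.single i 1)) -
        deriv (fun r => K (χ r)) (ρ x) * ‖fderiv ℝ ρ x‖ ^ 2 / 2 + gt (ρ x) = 0) :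
    c * ∫ x, (ρ x - 1) * fderiv ℝ φ x (EuclideanSpace.single (⟨0, hd⟩ : Fin d) 1) =
      ∫ x, χ (ρ x) * ‖fderiv ℝ φ x‖ ^ 2 := by
  obtain ⟨M, hM⟩ := hχbd
  have hMχ : ∀ r, |χ r| ≤ M := fun r => le_trans (le_add_of_nonneg_right (abs_nonneg _)) (hM r)
  set v0 : EuclideanSpace ℝ (Fin d) := EuclideanSpace.single (⟨0, hd⟩ : Fin d) 1 with hv0
  have hφdiff : Differentiable ℝ φ := hφ.differentiable (by simp)
  have hρdiff : Differentiable ℝ ρ := hρ.differentiable (by simp)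
  -- Memℒp facts
  have mφ : MemLp φ 2 (volume : Measure (EuclideanSpace ℝ (Fin d))) := by
    have h := hφH2 0 (by norm_num)
    simp only [norm_iteratedFDeriv_zero] at h
    exact (memLp_norm_iff hφdiff.continuous.aestronglyMeasurable).mp h
  have mρ : MemLp (fun x => ρ x - 1) 2 (volume : Measure (EuclideanSpace ℝ (Fin d))) := by
    have h := hρH2 0 (by norm_num)
    simp only [norm_iteratedFDeriv_zero] at h
    exact (memLp_norm_iff
      ((hρdiff.sub_const 1).continuous.aestronglyMeasurable)).mp h
  have hnφ : MemLp (fun x => ‖fderiv ℝ φ x‖) 2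
      (volume : Measure (EuclideanSpace ℝ (Fin d))) := by
    have h := hφH2 1 (by norm_num)
    have he : ∀ x, ‖iteratedFDeriv ℝ 1 φ x‖ = ‖fderiv ℝ φ x‖ := by
      intro x
      rw [← norm_iteratedFDeriv_fderiv (n := 0), norm_iteratedFDeriv_zero]
    simpa only [he] using h
  have hdφcont : ∀ v : EuclideanSpace ℝ (Fin d),
      Continuous (fun x => fderiv ℝ φ x v) :=
    fun v => ((hφ.fderiv_right (m := (⊤ : ℕ∞)) (by simp)).continuous.clm_apply continuous_const)
  have hdρcont : ∀ v : EuclideanSpace ℝ (Fin d),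
      Continuous (fun x => fderiv ℝ ρ x v) :=
    fun v => ((hρ.fderiv_right (m := (⊤ : ℕ∞)) (by simp)).continuous.clm_apply continuous_const)
  have mdφ : ∀ v : EuclideanSpace ℝ (Fin d), ‖v‖ = 1 →
      MemLp (fun x => fderiv ℝ φ x v) 2 (volume : Measure (EuclideanSpace ℝ (Fin d))) := by
    intro v hv
    apply hnφ.of_le_mul (c := 1) (hdφcont v).aestronglyMeasurable
    filter_upwards with x
    rw [one_mul]
    calc ‖fderiv ℝ φ x v‖ ≤ ‖fderiv ℝ φ x‖ * ‖v‖ := (fderiv ℝ φ x).le_opNorm v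
      _ = ‖‖fderiv ℝ φ x‖‖ := by rw [hv, mul_one, norm_norm]
  have mdρ : ∀ v : EuclideanSpace ℝ (Fin d), ‖v‖ = 1 →
      MemLp (fun x => fderiv ℝ ρ x v) 2 (volume : Measure (EuclideanSpace ℝ (Fin d))) := by
    intro v hv
    have h := hρH2 1 (by norm_num)
    have he : ∀ x, ‖iteratedFDeriv ℝ 1 (fun y => ρ y - 1) x‖ = ‖fderiv ℝ ρ x‖ := by
      intro x
      rw [← norm_iteratedFDeriv_fderiv (n := 0), norm_iteratedFDeriv_zero]
      congr 1
      exact fderiv_sub_const 1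
    rw [show (fun x => ‖iteratedFDeriv ℝ 1 (fun y => ρ y - 1) x‖)
      = fun x => ‖fderiv ℝ ρ x‖ from funext he] at h
    apply h.of_le_mul (c := 1) (hdρcont v).aestronglyMeasurable
    filter_upwards with x
    rw [one_mul]
    calc ‖fderiv ℝ ρ x v‖ ≤ ‖fderiv ℝ ρ x‖ * ‖v‖ := (fderiv ℝ ρ x).le_opNorm v
      _ = ‖‖fderiv ℝ ρ x‖‖ := by rw [hv, mul_one, norm_norm]
  have hv0n : ‖v0‖ = 1 := by simp [hv0, EuclideanSpace.norm_single]
  have hein : ∀ i : Fin d, ‖(EuclideanSpace.single i 1 : EuclideanSpace ℝ (Fin d))‖ = 1 :=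
    fun i => by simp [EuclideanSpace.norm_single]
  -- integration by parts for the first term
  have I1 : Integrable (fun x => (ρ x - 1) * fderiv ℝ φ x v0) volume :=
    l2_mul_integrable mρ (mdφ v0 hv0n)
  have I2 : Integrable (fun x => fderiv ℝ ρ x v0 * φ x) volume :=
    l2_mul_integrable (mdρ v0 hv0n) mφ
  have I3 : Integrable (fun x => (ρ x - 1) * φ x) volume :=
    l2_mul_integrable mρ mφ
  have IBP1 : ∫ x, (ρ x - 1) * fderiv ℝ φ x v0 = - ∫ x, fderiv ℝ ρ x v0 * φ x := by
    have h := integral_mul_fderiv_eq_neg_fderiv_mul_of_integrable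
      (f := fun x => ρ x - 1) (g := φ) (v := v0) (μ := volume)
      (by simpa only [fderiv_sub_const] using I2) I1 I3
      (fun x _ => (hρdiff.sub_const 1) x) (fun x _ => hφdiff x)
    simpa only [fderiv_sub_const] using h
  -- the divergence field
  set A : Fin d → EuclideanSpace ℝ (Fin d) → ℝ :=
    fun i y => χ (ρ y) * fderiv ℝ φ y (EuclideanSpace.single i 1) with hA
  set W : Fin d → EuclideanSpace ℝ (Fin d) → ℝ := fun i y => φ y * A i y with hW
  have hAi : ∀ i, ContDiff ℝ (⊤ : ℕ∞) (A i) := by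
    intro i
    exact (hχ.comp hρ).mul ((hφ.fderiv_right (m := (⊤ : ℕ∞)) (by simp)).clm_apply contDiff_const)
  have hWi : ∀ i, ContDiff ℝ (⊤ : ℕ∞) (W i) := fun i => hφ.mul (hAi i)
  have hWint : ∀ i, Integrable (W i) volume := by
    intro i
    apply Integrable.mono' ((l2_mul_integrable mφ (mdφ _ (hein i))).norm.const_mul M)
      (hWi i).continuous.aestronglyMeasurable
    filter_upwards with x
    rw [hW, hA]
    simp only [Real.norm_eq_abs, abs_mul]
    calc |φ x| * (|χ (ρ x)| * |fderiv ℝ φ x (EuclideanSpace.single i 1)|)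
        ≤ |φ x| * (M * |fderiv ℝ φ x (EuclideanSpace.single i 1)|) := by
          apply mul_le_mul_of_nonneg_left _ (abs_nonneg _)
          exact mul_le_mul_of_nonneg_right (hMχ _) (abs_nonneg _)
      _ = M * (|φ x| * |fderiv ℝ φ x (EuclideanSpace.single i 1)|) := by ring
  -- pointwise identity for the divergence
  have Gpt : ∀ x, (∑ i : Fin d, fderiv ℝ (W i) x (EuclideanSpace.single i 1)) =
      χ (ρ x) * ‖fderiv ℝ φ x‖ ^ 2 + c * (φ x * fderiv ℝ ρ x v0) := by
    intro x
    have hsum : ∀ i : Fin d, fderiv ℝ (W i) x (EuclideanSpace.single i 1) =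
        φ x * fderiv ℝ (A i) x (EuclideanSpace.single i 1) +
        A i x * fderiv ℝ φ x (EuclideanSpace.single i 1) := by
      intro i
      have h := fderiv_fun_mul (𝕜 := ℝ) (hφdiff x) (((hAi i).differentiable (by simp)) x)
      have : fderiv ℝ (W i) x = φ x • fderiv ℝ (A i) x + A i x • fderiv ℝ φ x := h
      rw [this]
      simp [smul_eq_mul]
    rw [Finset.sum_congr rfl (fun i _ => hsum i), Finset.sum_add_distrib]
    have hmassx := hmass x
    have h1 : ∑ i : Fin d, φ x * fderiv ℝ (A i) x (EuclideanSpace.single i 1) =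
        φ x * (c * fderiv ℝ ρ x v0) := by
      rw [← Finset.mul_sum]
      congr 1
      rw [hA]
      linarith [hmassx]
    have h2 : ∑ i : Fin d, A i x * fderiv ℝ φ x (EuclideanSpace.single i 1) =
        χ (ρ x) * ‖fderiv ℝ φ x‖ ^ 2 := by
      rw [opNorm_sq_eq_sum (fderiv ℝ φ x), Finset.mul_sum]
      congr 1; ext i; rw [hA]; ring
    rw [h1, h2]; ring
  have hnφcont : Continuous (fun x => ‖fderiv ℝ φ x‖) :=
    (hφ.fderiv_right (m := (⊤ : ℕ∞)) (by simp)).continuous.norm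
  have Ia : Integrable (fun x => χ (ρ x) * ‖fderiv ℝ φ x‖ ^ 2) volume := by
    apply Integrable.mono' ((l2_mul_integrable hnφ hnφ).norm.const_mul M)
      (((hχ.comp hρ).continuous.mul (hnφcont.pow 2)).aestronglyMeasurable)
    filter_upwards with x
    rw [Real.norm_eq_abs, Pi.mul_apply, Pi.pow_apply, Function.comp_apply, abs_mul]
    calc |χ (ρ x)| * |‖fderiv ℝ φ x‖ ^ 2|
        ≤ M * |‖fderiv ℝ φ x‖ ^ 2| := mul_le_mul_of_nonneg_right (hMχ _) (abs_nonneg _)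
      _ = M * ‖‖fderiv ℝ φ x‖ * ‖fderiv ℝ φ x‖‖ := by
          rw [Real.norm_eq_abs, sq, abs_mul]
  have Ib : Integrable (fun x => c * (φ x * fderiv ℝ ρ x v0)) volume :=
    (l2_mul_integrable mφ (mdρ v0 hv0n)).const_mul c
  have hGint : Integrable
      (fun x => ∑ i : Fin d, fderiv ℝ (W i) x (EuclideanSpace.single i 1)) volume := by
    rw [funext Gpt]
    exact Ia.add Ib
  have hzero := integral_div_sum_eq_zero W hWi hWint hGint
  rw [funext Gpt] at hzero
  rw [integral_add Ia Ib, integral_const_mul] at hzero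
  have hflip : ∫ x, fderiv ℝ ρ x v0 * φ x = ∫ x, φ x * fderiv ℝ ρ x v0 := by
    congr 1; ext x; ring
  rw [IBP1, hflip]
  linarith
end

section
/- Let ρ_∞ > 0, g smooth with g(ρ_∞) = 0, g'(ρ_∞) > 0, G the primitive of g vanishing at ρ_∞, K smooth positive, and c > 0. If (ρ, u) is a nontrivial traveling wave solution on ℝ of −c(ρ − ρ_∞) + ρu = 0 and −cu + u²/2 + g(ρ) = Kρ'' + (1/2)K'(ρ')², with ρ → ρ_∞ and u → 0 at ±∞ and ρ' → 0 at ±∞, then (1/2)K(ρ)(ρ')² = G(ρ) − (c²/(2ρ))(ρ − ρ_∞)² on ℝ, and consequently c ≤ √(ρ_∞ g'(ρ_∞)). -/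
open MeasureTheory Filter

/-- A nontrivial 1D Euler–Korteweg traveling wave with limits
`ρ → ρ_∞`, `u → 0`, `ρ' → 0` at `±∞` satisfies the first-integral identity
`(1/2) K(ρ) (ρ')² = G(ρ) − (c²/(2ρ))(ρ − ρ_∞)²`, and consequently the subsonic
condition `c ≤ √(ρ_∞ g'(ρ_∞))`. -/
theorem subsonic_condition_1d
    (ρ_inf : ℝ) (hρ_inf : 0 < ρ_inf)
    (g K : ℝ → ℝ) (hg : ContDiff ℝ (⊤ : ℕ∞) g) (hK : ContDiff ℝ (⊤ : ℕ∞) K)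
    (hg0 : g ρ_inf = 0) (hg' : 0 < deriv g ρ_inf) (hKpos : ∀ r, 0 < K r)
    (c : ℝ) (hc : 0 < c)
    (ρ u : ℝ → ℝ) (hρsm : ContDiff ℝ (⊤ : ℕ∞) ρ) (husm : ContDiff ℝ (⊤ : ℕ∞) u)
    (hρpos : ∀ x, 0 < ρ x)
    (hnontriv : ∃ x, ρ x ≠ ρ_inf)
    -- mass equation
    (hmass : ∀ x, -c * (ρ x - ρ_inf) + ρ x * u x = 0)
    -- momentum equation
    (hmom : ∀ x, -c * u x + (u x) ^ 2 / 2 + g (ρ x) =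
        K (ρ x) * deriv (deriv ρ) x + (1 / 2) * deriv K (ρ x) * (deriv ρ x) ^ 2)
    -- decay at infinity
    (hρtop : Tendsto ρ atTop (nhds ρ_inf)) (hρbot : Tendsto ρ atBot (nhds ρ_inf))
    (hutop : Tendsto u atTop (nhds 0)) (hubot : Tendsto u atBot (nhds 0))
    (hρ'top : Tendsto (deriv ρ) atTop (nhds 0)) (hρ'bot : Tendsto (deriv ρ) atBot (nhds 0)) :
    (∀ x, (1 / 2) * K (ρ x) * (deriv ρ x) ^ 2 =
        (∫ r in ρ_inf..(ρ x), g r) - (c ^ 2 / (2 * ρ x)) * (ρ x - ρ_inf) ^ 2) ∧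
    c ≤ Real.sqrt (ρ_inf * deriv g ρ_inf) := by
  have hρd : Differentiable ℝ ρ := hρsm.differentiable (by simp)
  have hρ'd : Differentiable ℝ (deriv ρ) :=
    ((contDiff_infty_iff_deriv.mp (hρsm.of_le (by simp))).2).differentiable (by simp)
  have hKd : Differentiable ℝ K := hK.differentiable (by simp)
  have hgc : Continuous g := hg.continuous
  set G : ℝ → ℝ := fun r => ∫ t in ρ_inf..r, g t with hG
  have hGd : ∀ r, HasDerivAt G (g r) r := fun r =>
    intervalIntegral.integral_hasDerivAt_right (hgc.intervalIntegrable _ _)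
      (hgc.stronglyMeasurableAtFilter _ _) hgc.continuousAt
  set F : ℝ → ℝ := fun x => 1/2 * K (ρ x) * (deriv ρ x)^2 - G (ρ x)
      + c^2 * (ρ x - ρ_inf)^2 / (2 * ρ x) with hF
  have hu : ∀ x, u x = c * (ρ x - ρ_inf) / ρ x := by
    intro x
    have h := hmass x
    field_simp [(hρpos x).ne']
    linarith [h]
  -- The first integral: F has zero derivative everywhere
  have hFderiv : ∀ x, HasDerivAt F 0 x := by
    intro x
    have hρ' : HasDerivAt ρ (deriv ρ x) x := (hρd x).hasDerivAt
    have hρ'' : HasDerivAt (deriv ρ) (deriv (deriv ρ) x) x := (hρ'd x).hasDerivAt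
    have hKc : HasDerivAt (fun y => K (ρ y)) (deriv K (ρ x) * deriv ρ x) x :=
      ((hKd (ρ x)).hasDerivAt).comp x hρ'
    have h1 := (hKc.const_mul (1/2 : ℝ)).mul (hρ''.pow 2)
    have h2 : HasDerivAt (fun y => G (ρ y)) (g (ρ x) * deriv ρ x) x :=
      (hGd (ρ x)).comp x hρ'
    have hnum := ((hρ'.sub_const ρ_inf).pow 2).const_mul (c^2)
    have hden := hρ'.const_mul (2 : ℝ)
    have h3 := hnum.div hden (by have := hρpos x; positivity)
    have H := (h1.sub h2).add h3
    refine HasDerivAt.congr_deriv H (Eq.symm ?_)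
    have hm := hmom x
    rw [hu x] at hm
    have h0 : ρ x ≠ 0 := (hρpos x).ne'
    linear_combination (norm := (simp only [Pi.pow_apply]; field_simp; ring)) (deriv ρ x) * hm
  have hFdiff : Differentiable ℝ F := fun x => (hFderiv x).differentiableAt
  have hFconst : ∀ x y, F x = F y :=
    is_const_of_deriv_eq_zero hFdiff (fun x => (hFderiv x).deriv)
  -- F tends to 0 at +∞
  have hGcont : Continuous G :=
    intervalIntegral.continuous_primitive (fun a b => hgc.intervalIntegrable a b) ρ_inf
  have t1 : Tendsto (fun x => 1/2 * K (ρ x) * (deriv ρ x)^2) atTop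
      (nhds (1/2 * K ρ_inf * 0^2)) :=
    (tendsto_const_nhds.mul ((hK.continuous.tendsto ρ_inf).comp hρtop)).mul (hρ'top.pow 2)
  have t2 : Tendsto (fun x => G (ρ x)) atTop (nhds (G ρ_inf)) :=
    (hGcont.tendsto ρ_inf).comp hρtop
  have t3 : Tendsto (fun x => c^2 * (ρ x - ρ_inf)^2 / (2 * ρ x)) atTop
      (nhds (c^2 * (ρ_inf - ρ_inf)^2 / (2 * ρ_inf))) :=
    (((hρtop.sub tendsto_const_nhds).pow 2).const_mul (c^2)).div
      (hρtop.const_mul (2 : ℝ)) (by positivity)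
  have hFtend : Tendsto F atTop (nhds 0) := by
    have H := (t1.sub t2).add t3
    have hval : 1/2 * K ρ_inf * 0^2 - G ρ_inf + c^2 * (ρ_inf - ρ_inf)^2 / (2 * ρ_inf) = 0 := by
      simp [hG, intervalIntegral.integral_same]
    rwa [hval] at H
  have hF0 : ∀ x, F x = 0 := by
    intro x
    have h1 : Tendsto F atTop (nhds (F x)) := tendsto_const_nhds.congr (fun y => hFconst x y)
    exact tendsto_nhds_unique h1 hFtend
  -- Part 1
  have part1 : ∀ x, (1 / 2) * K (ρ x) * (deriv ρ x) ^ 2 =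
      (∫ r in ρ_inf..(ρ x), g r) - (c ^ 2 / (2 * ρ x)) * (ρ x - ρ_inf) ^ 2 := by
    intro x
    have h := hF0 x
    rw [hF] at h
    simp only at h
    have hGx : G (ρ x) = ∫ r in ρ_inf..(ρ x), g r := rfl
    rw [hGx] at h
    linear_combination h
  refine ⟨part1, ?_⟩
  -- Part 2: subsonic condition
  set W : ℝ → ℝ := fun s => G s - c^2 * (s - ρ_inf)^2 / (2 * s) with hWdef
  have hW0 : W ρ_inf = 0 := by simp [hWdef, hG, intervalIntegral.integral_same]
  have hWnonneg : ∀ x, 0 ≤ W (ρ x) := by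
    intro x
    have h := part1 x
    have hWx : W (ρ x) = 1/2 * K (ρ x) * (deriv ρ x)^2 := by
      have hGx : G (ρ x) = ∫ r in ρ_inf..(ρ x), g r := rfl
      rw [hWdef]
      simp only
      rw [hGx]
      linear_combination -h
    rw [hWx]
    have := hKpos (ρ x)
    positivity
  obtain ⟨x₀, hx₀⟩ := hnontriv
  -- intermediate values: W ≥ 0 strictly between ρ_inf and ρ x₀
  have hiv : ∀ r, (ρ_inf < r ∧ r < ρ x₀) ∨ (ρ x₀ < r ∧ r < ρ_inf) → 0 ≤ W r := by
    intro r hr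
    have hrne : r ≠ ρ_inf := by rcases hr with ⟨h1, _⟩ | ⟨_, h2⟩; exacts [ne_of_gt h1, ne_of_lt h2]
    have hεpos : 0 < |r - ρ_inf| := abs_pos.mpr (sub_ne_zero.mpr hrne)
    obtain ⟨x₁, hx₁⟩ := (hρtop.eventually (eventually_abs_sub_lt ρ_inf hεpos)).exists
    have hmem : r ∈ Set.uIcc (ρ x₁) (ρ x₀) := by
      rcases hr with ⟨h1, h2⟩ | ⟨h1, h2⟩
      · have habs : |r - ρ_inf| = r - ρ_inf := abs_of_pos (sub_pos.mpr h1)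
        have : ρ x₁ < r := by
          have := (abs_lt.mp hx₁).2
          linarith [habs ▸ this]
        exact Set.mem_uIcc.mpr (Or.inl ⟨this.le, h2.le⟩)
      · have habs : |r - ρ_inf| = ρ_inf - r := by rw [abs_of_neg (by linarith)]; ring
        have : r < ρ x₁ := by
          have := (abs_lt.mp hx₁).1
          linarith [habs ▸ this]
        exact Set.mem_uIcc.mpr (Or.inr ⟨h1.le, this.le⟩)
    obtain ⟨x₂, _, hx₂⟩ := intermediate_value_uIcc (hρsm.continuous.continuousOn) hmem
    rw [← hx₂]
    exact hWnonneg x₂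
  by_contra hlt
  push_neg at hlt
  have hc2 : ρ_inf * deriv g ρ_inf < c^2 := (Real.sqrt_lt' hc).mp hlt
  -- derivative of W away from 0
  set φ : ℝ → ℝ := fun s => g s - c^2 * (s^2 - ρ_inf^2) / (2 * s^2) with hφdef
  have hWd : ∀ s, s ≠ 0 → HasDerivAt W (φ s) s := by
    intro s hs
    have hnum := (((hasDerivAt_id s).sub_const ρ_inf).pow 2).const_mul (c^2)
    have hden := (hasDerivAt_id s).const_mul (2 : ℝ)
    have h3 := hnum.div hden (by simpa using hs)
    have H := (hGd s).sub h3
    refine HasDerivAt.congr_deriv H (Eq.symm ?_)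
    simp only [id_eq, pow_one, mul_one, Nat.cast_ofNat, hφdef, Pi.pow_apply]
    congr 1
    rw [div_eq_div_iff (by positivity) (by positivity)]
    ring
  have hφ0 : φ ρ_inf = 0 := by simp [hφdef, hg0]
  have hφd : HasDerivAt φ (deriv g ρ_inf - c^2/ρ_inf) ρ_inf := by
    have h1 : HasDerivAt g (deriv g ρ_inf) ρ_inf := ((hg.differentiable (by simp)) ρ_inf).hasDerivAt
    have hnum : HasDerivAt (fun s : ℝ => c^2 * (s^2 - ρ_inf^2)) (c^2 * (2 * ρ_inf)) ρ_inf := by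
      simpa using ((hasDerivAt_pow 2 ρ_inf).sub_const (ρ_inf^2)).const_mul (c^2)
    have hden : HasDerivAt (fun s : ℝ => 2 * s^2) (2 * (2 * ρ_inf)) ρ_inf := by
      simpa using (hasDerivAt_pow 2 ρ_inf).const_mul (2 : ℝ)
    have h2 := hnum.div hden (by positivity)
    have H := h1.sub h2
    refine HasDerivAt.congr_deriv H (Eq.symm ?_)
    field_simp
    ring
  have hAneg : deriv g ρ_inf - c^2/ρ_inf < 0 := by
    have : deriv g ρ_inf < c^2/ρ_inf := (lt_div_iff₀ hρ_inf).mpr (by linarith)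
    linarith
  have hslope := hasDerivAt_iff_tendsto_slope.mp hφd
  have hev : ∀ᶠ y in nhdsWithin ρ_inf {ρ_inf}ᶜ, slope φ ρ_inf y < 0 :=
    hslope.eventually (gt_mem_nhds hAneg)
  rcases lt_or_gt_of_ne hx₀ with hcase | hcase
  · -- ρ x₀ < ρ_inf : work on the left of ρ_inf
    have hevl : ∀ᶠ y in nhdsWithin ρ_inf (Set.Iio ρ_inf), 0 < φ y := by
      have h1 := hev.filter_mono (nhdsWithin_mono ρ_inf (fun y (hy : y ∈ Set.Iio ρ_inf) => ne_of_lt hy))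
      filter_upwards [h1, self_mem_nhdsWithin] with y hy1 hy2
      rw [slope_def_field, hφ0, sub_zero] at hy1
      have hneg : y - ρ_inf < 0 := sub_neg.mpr hy2
      by_contra hcon
      push_neg at hcon
      have : 0 ≤ φ y / (y - ρ_inf) := by
        rw [div_nonneg_iff]
        exact Or.inr ⟨hcon, hneg.le⟩
      linarith
    obtain ⟨b, hb, hsub⟩ := mem_nhdsLT_iff_exists_Ioo_subset.mp hevl
    have hbx : max b (ρ x₀) < ρ_inf := max_lt hb hcase
    set r : ℝ := (max b (ρ x₀) + ρ_inf) / 2 with hrdef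
    have hr1 : max b (ρ x₀) < r := by rw [hrdef]; linarith
    have hr2 : r < ρ_inf := by rw [hrdef]; linarith
    have hrpos : 0 < max b (ρ x₀) := lt_of_lt_of_le (hρpos x₀) (le_max_right _ _)
    have hmono : StrictMonoOn W (Set.Icc r ρ_inf) := by
      apply strictMonoOn_of_deriv_pos (convex_Icc _ _)
      · intro y hy
        have hy0 : (0:ℝ) < y := by nlinarith [hrpos, hr1, hy.1]
        exact (hWd y hy0.ne').continuousAt.continuousWithinAt
      · intro y hy
        rw [interior_Icc] at hy
        have hy0 : (0:ℝ) < y := by nlinarith [hrpos, hr1, hy.1]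
        rw [(hWd y hy0.ne').deriv]
        exact hsub ⟨lt_of_le_of_lt (le_max_left _ _) (hr1.trans hy.1), hy.2⟩
    have hWr : W r < 0 := by
      have := hmono ⟨le_refl r, hr2.le⟩ ⟨hr2.le, le_refl ρ_inf⟩ hr2
      rwa [hW0] at this
    have : 0 ≤ W r := hiv r (Or.inr ⟨lt_of_le_of_lt (le_max_right _ _) hr1, hr2⟩)
    linarith
  · -- ρ_inf < ρ x₀ : work on the right of ρ_inf
    have hevr : ∀ᶠ y in nhdsWithin ρ_inf (Set.Ioi ρ_inf), φ y < 0 := by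
      have h1 := hev.filter_mono (nhdsWithin_mono ρ_inf (fun y (hy : y ∈ Set.Ioi ρ_inf) => ne_of_gt hy))
      filter_upwards [h1, self_mem_nhdsWithin] with y hy1 hy2
      rw [slope_def_field, hφ0, sub_zero] at hy1
      have hpos : 0 < y - ρ_inf := sub_pos.mpr hy2
      by_contra hcon
      push_neg at hcon
      have : 0 ≤ φ y / (y - ρ_inf) := div_nonneg hcon hpos.le
      linarith
    obtain ⟨b, hb, hsub⟩ := mem_nhdsGT_iff_exists_Ioo_subset.mp hevr
    have hbx : ρ_inf < min b (ρ x₀) := lt_min hb hcase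
    set r : ℝ := (ρ_inf + min b (ρ x₀)) / 2 with hrdef
    have hr1 : r < min b (ρ x₀) := by rw [hrdef]; linarith
    have hr2 : ρ_inf < r := by rw [hrdef]; linarith
    have hanti : StrictAntiOn W (Set.Icc ρ_inf r) := by
      apply strictAntiOn_of_deriv_neg (convex_Icc _ _)
      · intro y hy
        have hy0 : (0:ℝ) < y := lt_of_lt_of_le hρ_inf hy.1
        exact (hWd y hy0.ne').continuousAt.continuousWithinAt
      · intro y hy
        rw [interior_Icc] at hy
        have hy0 : (0:ℝ) < y := lt_trans hρ_inf hy.1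
        rw [(hWd y hy0.ne').deriv]
        exact hsub ⟨hy.1, lt_of_lt_of_le (lt_trans hy.2 hr1) (min_le_left _ _)⟩
    have hWr : W r < 0 := by
      have := hanti ⟨le_refl ρ_inf, hr2.le⟩ ⟨hr2.le, le_refl r⟩ hr2
      rwa [hW0] at this
    have : 0 ≤ W r := hiv r (Or.inl ⟨hr2, lt_of_lt_of_le hr1 (min_le_right _ _)⟩)
    linarith
end
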